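/- arXiv:1903.04970 — 3 statements merged into one kernel-verified Lean document; each statement's English description precedes it below -/
import Mathlib

section
/- Let β > 0, machine energies 0 = ℰ_0 ≤ ⋯ ≤ ℰ_{d_M−1} = ℰ_max with Gibbs state τ_M = τ(β,ℰ), and a qubit target (d_S = 2) with gap 0 < E_S ≤ ℰ_max, whose initial state is the 2×2 Gibbs state τ_S at β with energies (0, E_S). Then for every n ≥ 0 and every sequence of unitaries U_1,…,U_n on ℂ^2⊗ℂ^{d_M}, the largest eigenvalue (ground-state population) of Λ_{U_n}∘⋯∘Λ_{U_1}(τ_S) is at most 1/(1 + e^{−β ℰ_max}). -/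
open Filter Topology Kronecker Matrix
open scoped ComplexOrder

/-- Sum of the `k` largest entries of a real vector (maximum of all `k`-element subset sums). -/
noncomputable def sumKLargest {ι : Type*} [Fintype ι] (v : ι → ℝ) (k : ℕ) : ℝ :=
  sSup {x : ℝ | ∃ s : Finset ι, s.card = k ∧ ∑ i ∈ s, v i = x}

/-- `IsMajorizedBy x y` means `x ≺ y`: same total sum, and for every `k = 1,…,n` the
sum of the `k` largest entries of `x` is at most that of `y`. -/
def IsMajorizedBy {ι : Type*} [Fintype ι] (x y : ι → ℝ) : Prop :=
  (∑ i, x i = ∑ i, y i) ∧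
  ∀ k : ℕ, 1 ≤ k → k ≤ Fintype.card ι → sumKLargest x k ≤ sumKLargest y k

/-- The decreasing rearrangement of a real vector. -/
noncomputable def sortDesc {n : ℕ} (v : Fin n → ℝ) : Fin n → ℝ :=
  fun i => v (Tuple.sort v i.rev)

/-- The geometric probability vector `p*(g,d)` with entries `g^i / ∑_j g^j`. -/
noncomputable def pstar (g : ℝ) (d : ℕ) : Fin d → ℝ :=
  fun i => g ^ (i : ℕ) / ∑ j : Fin d, g ^ (j : ℕ)

/-- The Gibbs probability vector at inverse temperature `β` for energies `E`. -/
noncomputable def gibbsVec {m : ℕ} (β : ℝ) (E : Fin m → ℝ) : Fin m → ℝ :=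
  fun j => Real.exp (-(β * E j)) / ∑ k : Fin m, Real.exp (-(β * E k))

/-- The Gibbs state: diagonal density matrix with the Gibbs vector on the diagonal. -/
noncomputable def gibbsState {m : ℕ} (β : ℝ) (E : Fin m → ℝ) : Matrix (Fin m) (Fin m) ℂ :=
  Matrix.diagonal fun j => (gibbsVec β E j : ℂ)

/-- The eigenvalues of a Hermitian matrix (junk value `0` if not Hermitian). -/
noncomputable def eigVec {ι : Type*} [Fintype ι] [DecidableEq ι] (ρ : Matrix ι ι ℂ) : ι → ℝ := by
  classical exact if h : ρ.IsHermitian then h.eigenvalues else 0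

/-- The eigenvalue vector of a Hermitian matrix, listed in decreasing order. -/
noncomputable def eigVecDesc {d : ℕ} (ρ : Matrix (Fin d) (Fin d) ℂ) : Fin d → ℝ :=
  sortDesc (eigVec ρ)

/-- Partial trace over the machine: `(Tr_M X)_{s,s'} = ∑_m X_{(s,m),(s',m)}`. -/
noncomputable def ptraceM {dS dM : ℕ}
    (X : Matrix (Fin dS × Fin dM) (Fin dS × Fin dM) ℂ) : Matrix (Fin dS) (Fin dS) ℂ :=
  Matrix.of fun s s' => ∑ m : Fin dM, X (s, m) (s', m)

/-- The coherent operation `Λ_U(ρ) = Tr_M (U (ρ ⊗ τ_M) U†)` where `τ_M` is the diagonal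
machine state with diagonal `τ`. -/
noncomputable def coherentOp {dS dM : ℕ} (τ : Fin dM → ℝ)
    (U : Matrix (Fin dS × Fin dM) (Fin dS × Fin dM) ℂ)
    (ρ : Matrix (Fin dS) (Fin dS) ℂ) : Matrix (Fin dS) (Fin dS) ℂ :=
  ptraceM (U * (ρ ⊗ₖ Matrix.diagonal fun j => (τ j : ℂ)) * Uᴴ)

/-- `Λ_{U_n} ∘ ⋯ ∘ Λ_{U_1} (ρ)`: the machine is reset to its Gibbs state before each cycle. -/
noncomputable def coherentSeq {dS dM : ℕ} (τ : Fin dM → ℝ) {n : ℕ}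
    (U : Fin n → Matrix (Fin dS × Fin dM) (Fin dS × Fin dM) ℂ)
    (ρ : Matrix (Fin dS) (Fin dS) ℂ) : Matrix (Fin dS) (Fin dS) ℂ :=
  (List.ofFn U).foldl (fun σ V => coherentOp τ V σ) ρ

/-- The optimal coherent operation `A`: the diagonal matrix whose `i`-th diagonal entry is
`∑_{j<d_M} λ_{i·d_M+j}` where `λ` is the decreasing list of eigenvalues of `ρ ⊗ τ_M`. -/
noncomputable def Aopt {dS dM : ℕ} (τ : Fin dM → ℝ)
    (ρ : Matrix (Fin dS) (Fin dS) ℂ) : Matrix (Fin dS) (Fin dS) ℂ :=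
  Matrix.diagonal fun i : Fin dS =>
    ((∑ j : Fin dM,
      sortDesc
        (fun k : Fin (dS * dM) =>
          eigVec (ρ ⊗ₖ Matrix.diagonal fun l => (τ l : ℂ)) (finProdFinEquiv.symm k))
        ⟨(i : ℕ) * dM + (j : ℕ), by
          calc (i : ℕ) * dM + (j : ℕ) < (i : ℕ) * dM + dM := by
                exact Nat.add_lt_add_left j.isLt _
            _ = ((i : ℕ) + 1) * dM := by ring
            _ ≤ dS * dM := Nat.mul_le_mul_right dM i.isLt⟩ : ℝ) : ℂ)

/-- `Δ_i(p) = a·p_i − b·p_{i−1}` for `i ≥ 1` (and `0` for `i = 0`). -/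
noncomputable def delta (a b : ℝ) {d : ℕ} (p : Fin d → ℝ) (i : Fin d) : ℝ :=
  if (i : ℕ) = 0 then 0
  else a * p i - b * p ⟨(i : ℕ) - 1, Nat.lt_of_le_of_lt (Nat.sub_le _ _) i.isLt⟩

/-- The max-swap map `B`: if some `Δ_i(p) > 0`, pick an index `k̄` maximizing `Δ`,
move `Δ_{k̄}(p)` of population from level `k̄` to level `k̄−1`, and rearrange decreasingly;
otherwise `p` is left unchanged. -/
noncomputable def maxSwap (a b : ℝ) {d : ℕ} (p : Fin d → ℝ) : Fin d → ℝ := by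
  classical
  exact
    if h : ∃ k : Fin d, 0 < delta a b p k ∧ ∀ i, delta a b p i ≤ delta a b p k then
      sortDesc (fun i =>
        if i = h.choose then p h.choose - delta a b p h.choose
        else if (i : ℕ) = (h.choose : ℕ) - 1 then p i + delta a b p h.choose
        else p i)
    else p

/-!
Write `P = 1 / (1 + g)` with `g = e^{-β ℰ_max}`. The set of Hermitian trace-one qubit matrices
`σ ≤ P • 1` contains `τ_S` and is invariant under every `Λ_U`, and every eigenvalue of a
member is at most `P`.

For invariance, diagonalise `σ = V diag(r) V†` and put `W = U (V ⊗ 1)`. Then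
`⟨v, Λ_U(σ) v⟩ = ∑_{i,j} r_i τ_j c_{ij}` with `c_{ij} = ∑_m |⟨W e_{ij}, v ⊗ e_m⟩|²`, and
unitarity of `W` gives `0 ≤ c_{ij} ≤ ‖v‖²` and `∑ c_{ij} = d_M ‖v‖²`. The machine weights
`w_j = e^{-β ℰ_j}` lie in `[g, 1]` and `r_0 + r_1 = 1` with `r_i ≤ P`, so for each level `j`
`(r_0 c_{0j} + r_1 c_{1j}) w_j (1 + g) ≤ ‖v‖² w_j + g (c_{0j} + c_{1j} - ‖v‖²)`;
summed over `j` the correction terms cancel, leaving `⟨v, Λ_U(σ) v⟩ ≤ P ‖v‖²`.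
-/

open scoped MatrixOrder

section SquaredNorm

variable {n : Type*} [Fintype n]

lemma star_dotProduct_self_eq_sum_sq (x : n → ℂ) :
    star x ⬝ᵥ x = ((∑ i, ‖x i‖ ^ 2 : ℝ) : ℂ) := by
  push_cast
  exact Finset.sum_congr rfl fun i _ => Complex.conj_mul' (x i)

variable [DecidableEq n] {W : Matrix n n ℂ}

lemma sum_sq_norm_conjTranspose_mulVec (hW : W ∈ unitaryGroup n ℂ) (x : n → ℂ) :
    ∑ l, ‖(Wᴴ *ᵥ x) l‖ ^ 2 = ∑ k, ‖x k‖ ^ 2 := by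
  have h : star (Wᴴ *ᵥ x) ⬝ᵥ (Wᴴ *ᵥ x) = star x ⬝ᵥ x := by
    rw [star_mulVec, conjTranspose_conjTranspose, dotProduct_mulVec, vecMul_vecMul,
      ← star_eq_conjTranspose, mem_unitaryGroup_iff.mp hW, vecMul_one]
  rw [star_dotProduct_self_eq_sum_sq, star_dotProduct_self_eq_sum_sq] at h
  exact_mod_cast h

lemma sum_sq_norm_col_eq_one (hW : W ∈ unitaryGroup n ℂ) (l : n) :
    ∑ k, ‖W k l‖ ^ 2 = 1 := by
  have h := congrFun (congrFun (mem_unitaryGroup_iff'.mp hW) l) l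
  rw [star_eq_conjTranspose, mul_apply, one_apply_eq] at h
  have h' : ((∑ k, ‖W k l‖ ^ 2 : ℝ) : ℂ) = 1 := by
    push_cast
    rw [← h]
    exact Finset.sum_congr rfl fun k _ => (Complex.conj_mul' (W k l)).symm
  exact_mod_cast h'

end SquaredNorm

lemma sq_norm_sum_mul_le {ι : Type*} (s : Finset ι) (a b : ι → ℂ) :
    ‖∑ i ∈ s, a i * b i‖ ^ 2 ≤ (∑ i ∈ s, ‖a i‖ ^ 2) * ∑ i ∈ s, ‖b i‖ ^ 2 := by
  calc ‖∑ i ∈ s, a i * b i‖ ^ 2 ≤ (∑ i ∈ s, ‖a i‖ * ‖b i‖) ^ 2 := by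
        gcongr
        exact (norm_sum_le _ _).trans_eq (by simp only [norm_mul])
    _ ≤ _ := Finset.sum_mul_sq_le_sq_mul_sq s _ _

lemma star_dotProduct_conj_diagonal_mulVec {n : Type*} [Fintype n] [DecidableEq n]
    (W : Matrix n n ℂ) (d : n → ℝ) (x : n → ℂ) :
    star x ⬝ᵥ (W * diagonal (fun l => (d l : ℂ)) * Wᴴ) *ᵥ x
      = ((∑ l, d l * ‖(Wᴴ *ᵥ x) l‖ ^ 2 : ℝ) : ℂ) := by
  have h : star x ᵥ* W = star (Wᴴ *ᵥ x) := by
    rw [star_mulVec, conjTranspose_conjTranspose]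
  rw [← mulVec_mulVec, ← mulVec_mulVec, dotProduct_mulVec, h]
  push_cast
  simp only [mulVec_diagonal, dotProduct, Pi.star_apply, RCLike.star_def]
  refine Finset.sum_congr rfl fun l _ => ?_
  rw [mul_left_comm, Complex.conj_mul']

section PartialTrace

variable {dS dM : ℕ}

def tensorSingle (v : Fin dS → ℂ) (m : Fin dM) : Fin dS × Fin dM → ℂ :=
  fun k => if k.2 = m then v k.1 else 0

lemma sum_sq_norm_tensorSingle (v : Fin dS → ℂ) (m : Fin dM) :
    ∑ k, ‖tensorSingle v m k‖ ^ 2 = ∑ s, ‖v s‖ ^ 2 := by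
  rw [Fintype.sum_prod_type_right,
    Finset.sum_eq_single m (fun m' _ hm' => by simp [tensorSingle, hm']) (by simp)]
  simp [tensorSingle]

lemma conjTranspose_mulVec_tensorSingle (W : Matrix (Fin dS × Fin dM) (Fin dS × Fin dM) ℂ)
    (v : Fin dS → ℂ) (m : Fin dM) (l : Fin dS × Fin dM) :
    (Wᴴ *ᵥ tensorSingle v m) l = ∑ s, star (W (s, m) l) * v s := by
  simp only [mulVec, dotProduct, conjTranspose_apply, Fintype.sum_prod_type_right]
  rw [Finset.sum_eq_single m (fun m' _ hm' => by simp [tensorSingle, hm']) (by simp)]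
  simp [tensorSingle]

lemma dotProduct_ptraceM_mulVec (X : Matrix (Fin dS × Fin dM) (Fin dS × Fin dM) ℂ)
    (v : Fin dS → ℂ) :
    star v ⬝ᵥ ptraceM X *ᵥ v = ∑ m, star (tensorSingle v m) ⬝ᵥ X *ᵥ tensorSingle v m := by
  simp only [dotProduct, mulVec, ptraceM, tensorSingle, of_apply, Pi.star_apply,
    Fintype.sum_prod_type, apply_ite, star_zero, ite_mul, zero_mul, mul_zero,
    Finset.sum_ite_irrel, Finset.sum_const_zero, Finset.sum_ite_eq', Finset.mem_univ, if_true,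
    Finset.mul_sum, Finset.sum_mul]
  conv_rhs => rw [Finset.sum_comm]
  exact Finset.sum_congr rfl fun s _ => Finset.sum_comm

lemma ptraceM_isHermitian {X : Matrix (Fin dS × Fin dM) (Fin dS × Fin dM) ℂ}
    (hX : X.IsHermitian) : (ptraceM X).IsHermitian := by
  ext s s'
  simp only [conjTranspose_apply, ptraceM, of_apply, star_sum]
  exact Finset.sum_congr rfl fun m _ => congrFun (congrFun hX (s, m)) (s', m)

lemma trace_ptraceM (X : Matrix (Fin dS × Fin dM) (Fin dS × Fin dM) ℂ) :
    (ptraceM X).trace = X.trace := by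
  simp [ptraceM, trace, Fintype.sum_prod_type]

end PartialTrace

section PartialTraceWeight

variable {dS dM : ℕ}

noncomputable def ptraceWeight (W : Matrix (Fin dS × Fin dM) (Fin dS × Fin dM) ℂ)
    (v : Fin dS → ℂ) (l : Fin dS × Fin dM) : ℝ :=
  ∑ m, ‖(Wᴴ *ᵥ tensorSingle v m) l‖ ^ 2

variable {W : Matrix (Fin dS × Fin dM) (Fin dS × Fin dM) ℂ}

lemma ptraceWeight_nonneg (v : Fin dS → ℂ) (l : Fin dS × Fin dM) : 0 ≤ ptraceWeight W v l := by
  unfold ptraceWeight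
  positivity

lemma dotProduct_ptraceM_conj_diagonal_mulVec (d : Fin dS × Fin dM → ℝ) (v : Fin dS → ℂ) :
    star v ⬝ᵥ ptraceM (W * diagonal (fun l => (d l : ℂ)) * Wᴴ) *ᵥ v
      = ((∑ l, d l * ptraceWeight W v l : ℝ) : ℂ) := by
  simp only [dotProduct_ptraceM_mulVec, star_dotProduct_conj_diagonal_mulVec, ptraceWeight,
    Finset.mul_sum]
  push_cast
  exact Finset.sum_comm

lemma sum_ptraceWeight (hW : W ∈ unitaryGroup _ ℂ) (v : Fin dS → ℂ) :
    ∑ l, ptraceWeight W v l = dM * ∑ s, ‖v s‖ ^ 2 := by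
  simp only [ptraceWeight]
  rw [Finset.sum_comm]
  simp [sum_sq_norm_conjTranspose_mulVec hW, sum_sq_norm_tensorSingle]

lemma ptraceWeight_le (hW : W ∈ unitaryGroup _ ℂ) (v : Fin dS → ℂ) (l : Fin dS × Fin dM) :
    ptraceWeight W v l ≤ ∑ s, ‖v s‖ ^ 2 :=
  calc ptraceWeight W v l
      ≤ ∑ m, (∑ s, ‖W (s, m) l‖ ^ 2) * ∑ s, ‖v s‖ ^ 2 := by
        refine Finset.sum_le_sum fun m _ => ?_
        rw [conjTranspose_mulVec_tensorSingle]
        simpa only [norm_star] using sq_norm_sum_mul_le _ (fun s => star (W (s, m) l)) v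
    _ = ∑ s, ‖v s‖ ^ 2 := by
        rw [← Finset.sum_mul, ← Fintype.sum_prod_type_right (f := fun k => ‖W k l‖ ^ 2),
          sum_sq_norm_col_eq_one hW, one_mul]

end PartialTraceWeight

lemma Matrix.IsHermitian.eigenvalues_le_of_le_smul_one {n : Type*} [Fintype n] [DecidableEq n]
    {σ : Matrix n n ℂ} (hσ : σ.IsHermitian) {P : ℝ} (h : σ ≤ (P : ℂ) • 1) (i : n) :
    hσ.eigenvalues i ≤ P := by
  set u : n → ℂ := ⇑(hσ.eigenvectorBasis i)
  have hu : star u ⬝ᵥ u = 1 := by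
    rw [dotProduct_comm, ← EuclideanSpace.inner_eq_star_dotProduct, inner_self_eq_norm_sq_to_K,
      hσ.eigenvectorBasis.orthonormal.1 i]
    simp
  have h0 := (le_iff.mp h).dotProduct_mulVec_nonneg u
  rw [sub_mulVec, dotProduct_sub, smul_mulVec, one_mulVec, dotProduct_smul, hu, smul_eq_mul,
    mul_one] at h0
  rw [hσ.eigenvalues_eq i]
  simpa using (Complex.le_def.mp h0).1

section CoherentOp

variable {dS dM : ℕ} {U : Matrix (Fin dS × Fin dM) (Fin dS × Fin dM) ℂ}
  {σ : Matrix (Fin dS) (Fin dS) ℂ}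

lemma trace_coherentOp {τ : Fin dM → ℝ} (hU : U ∈ unitaryGroup _ ℂ) :
    (coherentOp τ U σ).trace = σ.trace * ∑ j, (τ j : ℂ) := by
  rw [coherentOp, trace_ptraceM, trace_mul_cycle, ← star_eq_conjTranspose,
    mem_unitaryGroup_iff'.mp hU, one_mul, trace_kronecker, trace_diagonal]

lemma exists_unitary_dotProduct_coherentOp_mulVec (hσ : σ.IsHermitian) (τ : Fin dM → ℝ)
    (hU : U ∈ unitaryGroup _ ℂ) :
    ∃ W ∈ unitaryGroup _ ℂ, ∀ v, star v ⬝ᵥ coherentOp τ U σ *ᵥ v =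
      ((∑ l, hσ.eigenvalues l.1 * τ l.2 * ptraceWeight W v l : ℝ) : ℂ) := by
  set V : Matrix (Fin dS) (Fin dS) ℂ := (hσ.eigenvectorUnitary : Matrix (Fin dS) (Fin dS) ℂ)
  refine ⟨U * (V ⊗ₖ 1), mul_mem hU (kronecker_mem_unitary hσ.eigenvectorUnitary.2 (one_mem _)),
    fun v => ?_⟩
  have hdiag : U * (σ ⊗ₖ diagonal fun j => (τ j : ℂ)) * Uᴴ =
      U * (V ⊗ₖ 1) * diagonal (fun l => ((hσ.eigenvalues l.1 * τ l.2 : ℝ) : ℂ)) *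
        (U * (V ⊗ₖ 1))ᴴ := by
    have hσV : σ = V * diagonal (RCLike.ofReal ∘ hσ.eigenvalues) * Vᴴ := hσ.spectral_theorem
    have hkron : σ ⊗ₖ diagonal (fun j => (τ j : ℂ)) =
        (V ⊗ₖ 1) * (diagonal (RCLike.ofReal ∘ hσ.eigenvalues) ⊗ₖ diagonal fun j => (τ j : ℂ)) *
          (Vᴴ ⊗ₖ 1) := by
      rw [← mul_kronecker_mul, ← mul_kronecker_mul, one_mul, mul_one, ← hσV]
    rw [hkron, diagonal_kronecker_diagonal, conjTranspose_mul, conjTranspose_kronecker,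
      conjTranspose_one]
    simp only [Matrix.mul_assoc, Function.comp_apply, Complex.ofReal_mul]
    rfl
  rw [coherentOp, hdiag, dotProduct_ptraceM_conj_diagonal_mulVec]

lemma coherentOp_isHermitian (τ : Fin dM → ℝ) (hσ : σ.IsHermitian) :
    (coherentOp τ U σ).IsHermitian := by
  refine ptraceM_isHermitian <| isHermitian_mul_mul_conjTranspose U ?_
  rw [IsHermitian, conjTranspose_kronecker, hσ.eq, diagonal_conjTranspose]
  congr
  ext j
  simp

end CoherentOp

lemma two_level_mul_le {g w r₀ r₁ a b N : ℝ} (hg : 0 ≤ g) (hgw : g ≤ w) (hw : w ≤ 1)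
    (hr : r₀ + r₁ = 1) (hr₀ : r₀ * (1 + g) ≤ 1) (hr₁ : r₁ * (1 + g) ≤ 1)
    (ha : 0 ≤ a) (haN : a ≤ N) (hb : 0 ≤ b) (hbN : b ≤ N) :
    (r₀ * a + r₁ * b) * w * (1 + g) ≤ N * w + g * (a + b - N) := by
  obtain rfl : r₁ = 1 - r₀ := by linarith
  -- Affine in `r₀`: the cases `a ≥ b` and `a ≤ b` compare it with the endpoint
  -- `r₀ (1 + g) = 1`, resp. `r₀ (1 + g) = g`, where it is a sum of products of nonnegative factors.
  have ht₀ : 0 ≤ 1 - r₀ * (1 + g) := by linarith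
  have ht₁ : 0 ≤ r₀ * (1 + g) - g := by linarith
  have hw₀ : 0 ≤ w := hg.trans hgw
  rcases le_total b a with hab | hab
  · nlinarith [mul_nonneg (mul_nonneg ht₀ hw₀) (sub_nonneg.2 hab),
      mul_nonneg (sub_nonneg.2 haN) (sub_nonneg.2 hgw),
      mul_nonneg (mul_nonneg hg hb) (sub_nonneg.2 hw)]
  · nlinarith [mul_nonneg (mul_nonneg ht₁ hw₀) (sub_nonneg.2 hab),
      mul_nonneg (sub_nonneg.2 hbN) (sub_nonneg.2 hgw),
      mul_nonneg (mul_nonneg hg ha) (sub_nonneg.2 hw)]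

lemma sum_two_level_mul_le {dM : ℕ} {g N : ℝ} {w : Fin dM → ℝ} {r : Fin 2 → ℝ}
    {c : Fin 2 × Fin dM → ℝ} (hg : 0 ≤ g) (hgw : ∀ j, g ≤ w j) (hw : ∀ j, w j ≤ 1)
    (hr : r 0 + r 1 = 1) (hrg : ∀ i, r i ≤ 1 / (1 + g))
    (hc : ∀ l, 0 ≤ c l) (hcN : ∀ l, c l ≤ N) (hsum : ∑ l, c l = dM * N) (hN : 0 ≤ N) :
    ∑ l, r l.1 * (w l.2 / ∑ k, w k) * c l ≤ N / (1 + g) := by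
  set Z := ∑ k, w k
  have h1g : 0 < 1 + g := by linarith
  have hZ : 0 ≤ Z := Finset.sum_nonneg fun j _ => hg.trans (hgw j)
  have hrg' : ∀ i, r i * (1 + g) ≤ 1 := fun i => (le_div_iff₀ h1g).mp (hrg i)
  have hcol : ∀ j, r 0 * (w j / Z) * c (0, j) + r 1 * (w j / Z) * c (1, j) ≤
      (N * w j + g * (c (0, j) + c (1, j) - N)) / (1 + g) / Z := by
    intro j
    have key := two_level_mul_le hg (hgw j) (hw j) hr (hrg' 0) (hrg' 1)
      (hc (0, j)) (hcN (0, j)) (hc (1, j)) (hcN (1, j))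
    calc r 0 * (w j / Z) * c (0, j) + r 1 * (w j / Z) * c (1, j)
        = (r 0 * c (0, j) + r 1 * c (1, j)) * w j / Z := by ring
      _ ≤ _ := div_le_div_of_nonneg_right ((le_div_iff₀ h1g).mpr key) hZ
  have hcsum : ∑ j, (c (0, j) + c (1, j)) = dM * N := by
    rw [← hsum, Fintype.sum_prod_type, Fin.sum_univ_two, Finset.sum_add_distrib]
  calc ∑ l, r l.1 * (w l.2 / Z) * c l
      = ∑ j, (r 0 * (w j / Z) * c (0, j) + r 1 * (w j / Z) * c (1, j)) := by
        rw [Fintype.sum_prod_type, Fin.sum_univ_two, Finset.sum_add_distrib]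
    _ ≤ ∑ j, (N * w j + g * (c (0, j) + c (1, j) - N)) / (1 + g) / Z :=
        Finset.sum_le_sum fun j _ => hcol j
    _ = N / (1 + g) * (Z / Z) := by
        rw [← Finset.sum_div, ← Finset.sum_div, Finset.sum_add_distrib, ← Finset.mul_sum,
          ← Finset.mul_sum, Finset.sum_sub_distrib, hcsum]
        simp only [Finset.sum_const, Finset.card_univ, Fintype.card_fin, nsmul_eq_mul]
        ring
    -- `Z / Z ≤ 1` also covers the junk case `Z = 0`
    _ ≤ N / (1 + g) := mul_le_of_le_one_right (div_nonneg hN h1g.le) (div_self_le_one Z)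

theorem coherentOp_le_smul_one {dM : ℕ} {w : Fin dM → ℝ} {g : ℝ} (hg : 0 ≤ g)
    (hgw : ∀ j, g ≤ w j) (hw : ∀ j, w j ≤ 1) {U : Matrix (Fin 2 × Fin dM) (Fin 2 × Fin dM) ℂ}
    (hU : U ∈ unitaryGroup _ ℂ) {σ : Matrix (Fin 2) (Fin 2) ℂ} (hσ : σ.IsHermitian)
    (htr : σ.trace = 1) (hle : σ ≤ ((1 / (1 + g) : ℝ) : ℂ) • 1) :
    coherentOp (fun j => w j / ∑ k, w k) U σ ≤ ((1 / (1 + g) : ℝ) : ℂ) • 1 := by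
  obtain ⟨W, hW, hquad⟩ := exists_unitary_dotProduct_coherentOp_mulVec hσ
    (fun j => w j / ∑ k, w k) hU
  have hr : hσ.eigenvalues 0 + hσ.eigenvalues 1 = 1 := by
    have := congrArg Complex.re hσ.trace_eq_sum_eigenvalues
    simpa [htr, Fin.sum_univ_two] using this.symm
  have hherm : (((1 / (1 + g) : ℝ) : ℂ) • (1 : Matrix (Fin 2) (Fin 2) ℂ)).IsHermitian := by
    simp [IsHermitian, conjTranspose_smul]
  refine le_iff.mpr <| .of_dotProduct_mulVec_nonneg
    (hherm.sub (coherentOp_isHermitian _ hσ)) fun v => ?_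
  have hbound := sum_two_level_mul_le hg hgw hw hr (hσ.eigenvalues_le_of_le_smul_one hle)
    (ptraceWeight_nonneg v) (ptraceWeight_le hW v) (sum_ptraceWeight hW v)
    (Finset.sum_nonneg fun s _ => sq_nonneg ‖v s‖)
  rw [sub_mulVec, dotProduct_sub, smul_mulVec, one_mulVec, dotProduct_smul,
    star_dotProduct_self_eq_sum_sq, hquad, smul_eq_mul, ← Complex.ofReal_mul,
    ← Complex.ofReal_sub, Complex.zero_le_real, sub_nonneg]
  simpa [div_eq_inv_mul] using hbound

lemma eigVecDesc_le_of_le {d : ℕ} {σ : Matrix (Fin d) (Fin d) ℂ} (hσ : σ.IsHermitian) {P : ℝ}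
    (h : σ ≤ (P : ℂ) • 1) (i : Fin d) : eigVecDesc σ i ≤ P := by
  simp only [eigVecDesc, sortDesc, eigVec, dif_pos hσ]
  exact hσ.eigenvalues_le_of_le_smul_one h _

lemma coherentSeq_mem {dS dM n : ℕ} {τ : Fin dM → ℝ}
    {U : Fin n → Matrix (Fin dS × Fin dM) (Fin dS × Fin dM) ℂ}
    {S : Set (Matrix (Fin dS) (Fin dS) ℂ)}
    (hS : ∀ i, ∀ σ ∈ S, coherentOp τ (U i) σ ∈ S) {ρ : Matrix (Fin dS) (Fin dS) ℂ} (hρ : ρ ∈ S) :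
    coherentSeq τ U ρ ∈ S := by
  suffices h : ∀ L : List (Matrix (Fin dS × Fin dM) (Fin dS × Fin dM) ℂ),
      (∀ V ∈ L, ∀ σ ∈ S, coherentOp τ V σ ∈ S) →
        ∀ ρ ∈ S, L.foldl (fun σ V => coherentOp τ V σ) ρ ∈ S by
    refine h _ (fun V hV => ?_) ρ hρ
    obtain ⟨i, rfl⟩ := List.mem_ofFn.mp hV
    exact hS i
  intro L
  induction L with
  | nil => exact fun _ ρ hρ => hρ
  | cons V L ih =>
    intro hL ρ hρ
    exact ih (fun V' hV' => hL V' (List.mem_cons_of_mem V hV')) _ (hL V List.mem_cons_self ρ hρ)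

section Gibbs

variable {m : ℕ} (β : ℝ) (E : Fin m → ℝ)

lemma sum_gibbsVec [NeZero m] : ∑ j, gibbsVec β E j = 1 := by
  simp only [gibbsVec]
  rw [← Finset.sum_div, div_self]
  exact (Finset.sum_pos (fun k _ => Real.exp_pos _) Finset.univ_nonempty).ne'

lemma gibbsState_isHermitian : (gibbsState β E).IsHermitian := by
  rw [gibbsState, IsHermitian, diagonal_conjTranspose]
  congr
  ext j
  simp

lemma trace_gibbsState [NeZero m] : (gibbsState β E).trace = 1 := by
  rw [gibbsState, trace_diagonal, ← Complex.ofReal_sum, sum_gibbsVec, Complex.ofReal_one]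

variable {β E}

lemma gibbsState_le_smul_one {P : ℝ} (h : ∀ j, gibbsVec β E j ≤ P) :
    gibbsState β E ≤ (P : ℂ) • 1 := by
  rw [le_iff, gibbsState, ← diagonal_one, ← diagonal_smul, diagonal_sub, posSemidef_diagonal_iff]
  intro j
  simpa [← Complex.ofReal_sub, Complex.zero_le_real] using h j

end Gibbs

lemma gibbsVec_two_le {β : ℝ} {E : Fin 2 → ℝ} {g : ℝ} (hg : 0 ≤ g)
    (hE : ∀ i, g ≤ Real.exp (-(β * E i)) ∧ Real.exp (-(β * E i)) ≤ 1) (i : Fin 2) :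
    gibbsVec β E i ≤ 1 / (1 + g) := by
  obtain ⟨h₀, h₀'⟩ := hE 0
  obtain ⟨h₁, h₁'⟩ := hE 1
  rw [gibbsVec, Fin.sum_univ_two, div_le_div_iff₀ (by positivity) (by positivity)]
  fin_cases i <;> simp only [Fin.zero_eta, Fin.mk_one] <;> nlinarith

/-- Qubit target, thermal initial state: after any number of cycles of any
coherent machine, the ground-state population is at most `1/(1 + e^{−β ℰ_max})`. -/
theorem qubit_ground_state_bound {dM : ℕ} (hdM : 0 < dM)
    (β : ℝ) (hβ : 0 < β)
    (E : Fin dM → ℝ) (hmono : Monotone E) (hE0 : E ⟨0, hdM⟩ = 0)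
    (ES : ℝ) (hES : 0 < ES) (hESmax : ES ≤ E ⟨dM - 1, Nat.sub_lt hdM Nat.one_pos⟩)
    {n : ℕ}
    (U : Fin n → Matrix (Fin 2 × Fin dM) (Fin 2 × Fin dM) ℂ)
    (hU : ∀ i, U i ∈ Matrix.unitaryGroup (Fin 2 × Fin dM) ℂ) :
    eigVecDesc (coherentSeq (gibbsVec β E) U (gibbsState β ![0, ES])) 0 ≤
      1 / (1 + Real.exp (-(β * E ⟨dM - 1, Nat.sub_lt hdM Nat.one_pos⟩))) := by
  have : NeZero dM := ⟨hdM.ne'⟩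
  set Emax := E ⟨dM - 1, Nat.sub_lt hdM Nat.one_pos⟩
  set g := Real.exp (-(β * Emax))
  have hg : 0 ≤ g := (Real.exp_pos _).le
  have hexp : ∀ x, 0 ≤ x → x ≤ Emax → g ≤ Real.exp (-(β * x)) ∧ Real.exp (-(β * x)) ≤ 1 :=
    fun x hx hxE => ⟨Real.exp_le_exp.mpr (by nlinarith), Real.exp_le_one_iff.mpr (by nlinarith)⟩
  have hw (j : Fin dM) : g ≤ Real.exp (-(β * E j)) ∧ Real.exp (-(β * E j)) ≤ 1 :=
    hexp _ (hE0 ▸ hmono (Nat.zero_le _)) (hmono (Nat.le_sub_one_of_lt j.isLt))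
  have hwS (i : Fin 2) : g ≤ Real.exp (-(β * ![0, ES] i)) ∧ Real.exp (-(β * ![0, ES] i)) ≤ 1 := by
    fin_cases i
    · exact hexp 0 le_rfl (hES.le.trans hESmax)
    · exact hexp ES hES.le hESmax
  let S : Set (Matrix (Fin 2) (Fin 2) ℂ) :=
    {σ | σ.IsHermitian ∧ σ.trace = 1 ∧ σ ≤ ((1 / (1 + g) : ℝ) : ℂ) • 1}
  have hinit : gibbsState β ![0, ES] ∈ S :=
    ⟨gibbsState_isHermitian _ _, trace_gibbsState _ _,
      gibbsState_le_smul_one (gibbsVec_two_le hg hwS)⟩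
  have hstep : ∀ i, ∀ σ ∈ S, coherentOp (gibbsVec β E) (U i) σ ∈ S := fun i σ ⟨hσ, htr, hle⟩ =>
    ⟨coherentOp_isHermitian _ hσ,
      by rw [trace_coherentOp (hU i), htr, one_mul, ← Complex.ofReal_sum, sum_gibbsVec,
        Complex.ofReal_one],
      coherentOp_le_smul_one hg (fun j => (hw j).1) (fun j => (hw j).2) (hU i) hσ htr hle⟩
  obtain ⟨hσ, -, hle⟩ := coherentSeq_mem hstep hinit
  exact eigVecDesc_le_of_le hσ hle 0
end

section
/- For every probability vector p ∈ ℝ^d with decreasing entries and all integers n ≥ m ≥ 0, the vector B^n(p) majorizes B^m(p) (where B^0(p) = p). -/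
open Filter Topology Kronecker Matrix
open scoped ComplexOrder

/-!
One step of `B` moves the amount `Δ_{k̄}(p) > 0` from level `k̄` to level `k̄ - 1`. On a decreasing
vector this is a transfer from a smaller entry to a larger one, and such a transfer can only
increase the sum of the `k` largest entries, for every `k`: a `k`-set containing `k̄` but not
`k̄ - 1` is beaten by the set with `k̄` exchanged for `k̄ - 1`. Sorting does not change these sums
and makes the result decreasing again, so the iterates `B^n(p)` form a majorization chain.
-/

open Finset

section Majorization

variable {ι : Type*} [Fintype ι]

lemma bddAbove_subsetSums (v : ι → ℝ) (k : ℕ) :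
    BddAbove {x : ℝ | ∃ s : Finset ι, s.card = k ∧ ∑ i ∈ s, v i = x} :=
  ((Set.finite_range fun s : Finset ι => ∑ i ∈ s, v i).subset
    (by rintro x ⟨s, -, rfl⟩; exact ⟨s, rfl⟩)).bddAbove

lemma sumKLargest_le_sumKLargest {v w : ι → ℝ} {k : ℕ} (hk : k ≤ Fintype.card ι)
    (h : ∀ s : Finset ι, s.card = k →
      ∃ t : Finset ι, t.card = k ∧ ∑ i ∈ s, v i ≤ ∑ i ∈ t, w i) :
    sumKLargest v k ≤ sumKLargest w k := by
  obtain ⟨s₀, -, hs₀⟩ := exists_subset_card_eq (s := (univ : Finset ι)) (by simpa using hk)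
  refine csSup_le ⟨_, s₀, hs₀, rfl⟩ ?_
  rintro x ⟨s, hs, rfl⟩
  obtain ⟨t, ht, hst⟩ := h s hs
  exact hst.trans (le_csSup (bddAbove_subsetSums w k) ⟨t, ht, rfl⟩)

lemma sumKLargest_comp_perm (v : ι → ℝ) (σ : Equiv.Perm ι) (k : ℕ) :
    sumKLargest (v ∘ σ) k = sumKLargest v k := by
  unfold sumKLargest
  congr 1
  ext x
  constructor
  · rintro ⟨s, rfl, rfl⟩
    exact ⟨s.map σ.toEmbedding, card_map _, sum_map _ _ _⟩
  · rintro ⟨t, rfl, rfl⟩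
    exact ⟨t.map σ.symm.toEmbedding, card_map _, by simp [sum_map]⟩

instance : Std.Refl (IsMajorizedBy (ι := ι)) :=
  ⟨fun _ => ⟨rfl, fun _ _ _ => le_rfl⟩⟩

instance : IsTrans (ι → ℝ) IsMajorizedBy :=
  ⟨fun _ _ _ h₁ h₂ => ⟨h₁.1.trans h₂.1, fun k hk hk' => (h₁.2 k hk hk').trans (h₂.2 k hk hk')⟩⟩

lemma IsMajorizedBy.comp_perm_right {x y : ι → ℝ} (h : IsMajorizedBy x y) (σ : Equiv.Perm ι) :
    IsMajorizedBy x (y ∘ σ) :=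
  ⟨h.1.trans (Equiv.sum_comp σ y).symm,
    fun k hk hk' => (sumKLargest_comp_perm y σ k).symm ▸ h.2 k hk hk'⟩

lemma isMajorizedBy_add_single_sub_single [DecidableEq ι] (q : ι → ℝ) {i j : ι} (hij : i ≠ j)
    {δ : ℝ} (hδ : 0 ≤ δ) (hq : q j ≤ q i + δ) :
    IsMajorizedBy q (q + Pi.single i δ - Pi.single j δ : ι → ℝ) := by
  have hsum : ∀ s : Finset ι, ∑ l ∈ s, (q + Pi.single i δ - Pi.single j δ : ι → ℝ) l =
      ∑ l ∈ s, q l + ((if i ∈ s then δ else 0) - if j ∈ s then δ else 0) := by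
    intro s
    simp only [Pi.add_apply, Pi.sub_apply, sum_sub_distrib, sum_add_distrib, sum_pi_single']
    ring
  refine ⟨by rw [hsum]; simp, fun k _ hk => sumKLargest_le_sumKLargest hk fun s hs => ?_⟩
  by_cases hjs : j ∈ s
  · by_cases his : i ∈ s
    · exact ⟨s, hs, by rw [hsum, if_pos his, if_pos hjs]; simp⟩
    have his' : i ∉ s.erase j := fun h => his (mem_of_mem_erase h)
    refine ⟨insert i (s.erase j), ?_, ?_⟩
    · rw [card_insert_of_notMem his', card_erase_of_mem hjs, ← hs]
      exact Nat.sub_add_cancel (card_pos.mpr ⟨j, hjs⟩)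
    · rw [hsum, if_pos (mem_insert_self _ _), if_neg (by simp [hij.symm]),
        sum_insert his', ← add_sum_erase s q hjs]
      linarith
  · refine ⟨s, hs, ?_⟩
    rw [hsum, if_neg hjs]
    split_ifs <;> linarith

end Majorization

lemma sortDesc_antitone {n : ℕ} (v : Fin n → ℝ) : Antitone (sortDesc v) :=
  fun _ _ hij => Tuple.monotone_sort v (Fin.rev_le_rev.mpr hij)

lemma IsMajorizedBy.sortDesc_right {n : ℕ} {x y : Fin n → ℝ} (h : IsMajorizedBy x y) :
    IsMajorizedBy x (sortDesc y) :=
  h.comp_perm_right (Fin.revPerm.trans (Tuple.sort y))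

section MaxSwap

variable {a b : ℝ} {d : ℕ}

lemma maxSwap_eq_self_or_transfer (q : Fin d → ℝ) :
    maxSwap a b q = q ∨ ∃ i j : Fin d, i < j ∧ 0 < delta a b q j ∧
      maxSwap a b q = sortDesc (q + Pi.single i (delta a b q j) - Pi.single j (delta a b q j)) := by
  unfold maxSwap
  split_ifs with h
  · set K := h.choose
    have hK : (K : ℕ) ≠ 0 := fun hK => h.choose_spec.1.ne' (if_pos hK)
    refine Or.inr ⟨⟨K - 1, by omega⟩, K, Fin.mk_lt_of_lt_val (by omega), h.choose_spec.1, ?_⟩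
    congr 1
    funext l
    simp only [Pi.add_apply, Pi.sub_apply, Pi.single_apply, Fin.ext_iff]
    split_ifs with hlK
    · omega
    · rw [Fin.ext hlK]
      ring
    all_goals ring
  · exact Or.inl rfl

lemma antitone_maxSwap {q : Fin d → ℝ} (hq : Antitone q) : Antitone (maxSwap a b q) := by
  rcases maxSwap_eq_self_or_transfer (a := a) (b := b) q with h | ⟨_, _, _, _, h⟩ <;> rw [h]
  exacts [hq, sortDesc_antitone _]

lemma isMajorizedBy_maxSwap {q : Fin d → ℝ} (hq : Antitone q) :
    IsMajorizedBy q (maxSwap a b q) := by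
  rcases maxSwap_eq_self_or_transfer (a := a) (b := b) q with h | ⟨i, j, hij, hΔ, h⟩ <;> rw [h]
  · exact refl q
  · exact (isMajorizedBy_add_single_sub_single q hij.ne hΔ.le
      (by linarith [hq hij.le])).sortDesc_right

end MaxSwap

theorem maxSwap_iterates_monotone_general {d : ℕ}
    (a b : ℝ)
    (p : Fin d → ℝ) (hdec : Antitone p)
    (m n : ℕ) (hmn : m ≤ n) :
    IsMajorizedBy ((maxSwap a b)^[m] p) ((maxSwap a b)^[n] p) := by
  have hanti : ∀ k, Antitone ((maxSwap a b)^[k] p) :=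
    Function.Iterate.rec _ hdec fun _ => antitone_maxSwap
  refine Nat.rel_of_forall_rel_succ_of_le IsMajorizedBy (f := fun k => (maxSwap a b)^[k] p)
    (fun k => ?_) hmn
  rw [Function.iterate_succ_apply']
  exact isMajorizedBy_maxSwap (hanti k)

/-- For a decreasing probability vector `p`, `B^n(p)` majorizes `B^m(p)`
whenever `n ≥ m ≥ 0`. -/
theorem maxSwap_iterates_monotone {d : ℕ} (hd : 2 ≤ d)
    (a b : ℝ) (hb : 0 < b) (hba : b ≤ a) (hab : a + b ≤ 1)
    (p : Fin d → ℝ) (hnn : ∀ i, 0 ≤ p i) (hsum : ∑ i, p i = 1) (hdec : Antitone p)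
    (m n : ℕ) (hmn : m ≤ n) :
    IsMajorizedBy ((maxSwap a b)^[m] p) ((maxSwap a b)^[n] p) :=
  maxSwap_iterates_monotone_general a b p hdec m n hmn
end

section
/- Let g ∈ (0,1] and d ≥ 1. If a probability vector f ∈ ℝ^d with decreasing entries satisfies f_i ≤ g·f_{i−1} for all i = 1,…,d−1 and f is majorized by p*(g,d), then f = p*(g,d). -/
open Filter Topology Kronecker Matrix
open scoped ComplexOrder

/-!
The ratio condition says that `f i / g ^ i` is decreasing, i.e. `p*_i f_m ≤ p*_m f_i` for `i ≤ m`.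
Splitting the indices at `k` and comparing the cross terms of head and tail then shows that
the first `k` entries of `f` carry at least the share `∑_{i<k} p*_i` of the total mass. As `f` and
`p*` are both decreasing, majorization `f ≺ p*` is the reverse inequality of these prefix sums,
so all prefix sums agree and `f = p*`.
-/

open Finset

lemma Fin.val_le_of_strictMono {k d : ℕ} {e : Fin k → Fin d} (he : StrictMono e) (j : Fin k) :
    (j : ℕ) ≤ e j := by
  have hcard := card_le_card_of_injOn e (s := Iic j) (t := Iic (e j))
    (fun a ha => by simpa using he.monotone (by simpa using ha)) he.injective.injOn
  simpa using hcard

noncomputable def prefixSum {d : ℕ} (v : Fin d → ℝ) (k : ℕ) : ℝ :=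
  ∑ i ∈ univ.filter (fun i : Fin d => (i : ℕ) < k), v i

lemma prefixSum_succ {d : ℕ} (v : Fin d → ℝ) (i : Fin d) :
    prefixSum v ((i : ℕ) + 1) = prefixSum v i + v i := by
  have hinsert : univ.filter (fun j : Fin d => (j : ℕ) < (i : ℕ) + 1) =
      insert i (univ.filter (fun j : Fin d => (j : ℕ) < i)) := by
    ext j
    simp only [mem_filter, mem_univ, true_and, mem_insert, Fin.ext_iff]
    omega
  rw [prefixSum, hinsert, sum_insert (by simp), add_comm]
  rfl

lemma prefixSum_eq_sum_castLE {d k : ℕ} (v : Fin d → ℝ) (hk : k ≤ d) :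
    prefixSum v k = ∑ j : Fin k, v (Fin.castLE hk j) := by
  have hmap : univ.filter (fun i : Fin d => (i : ℕ) < k) = univ.map (Fin.castLEEmb hk) := by
    ext i
    simp only [mem_filter, mem_univ, true_and, Finset.mem_map]
    exact ⟨fun hi => ⟨⟨i, hi⟩, rfl⟩, by rintro ⟨j, -, rfl⟩; exact j.isLt⟩
  rw [prefixSum, hmap, sum_map]
  rfl

lemma eq_of_prefixSum_eq {d : ℕ} {u v : Fin d → ℝ}
    (h : ∀ k ≤ d, prefixSum u k = prefixSum v k) : u = v := by
  funext i
  have hsucc := h (i + 1) i.isLt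
  rw [prefixSum_succ, prefixSum_succ, h i i.isLt.le] at hsucc
  exact add_left_cancel hsucc

lemma Antitone.sum_le_prefixSum {d : ℕ} {v : Fin d → ℝ} (hv : Antitone v) (s : Finset (Fin d)) :
    ∑ i ∈ s, v i ≤ prefixSum v s.card := by
  set e := s.orderEmbOfFin rfl
  have hs : ∑ i ∈ s, v i = ∑ j, v (e j) := by
    conv_lhs => rw [← s.map_orderEmbOfFin_univ rfl]
    rw [sum_map]
    rfl
  rw [hs, prefixSum_eq_sum_castLE v (card_finset_fin_le s)]
  exact sum_le_sum fun j _ => hv (Fin.le_def.mpr (Fin.val_le_of_strictMono e.strictMono j))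

lemma Antitone.sumKLargest_eq_prefixSum {d k : ℕ} {v : Fin d → ℝ} (hv : Antitone v)
    (hk : k ≤ d) : sumKLargest v k = prefixSum v k := by
  refine IsGreatest.csSup_eq ⟨⟨univ.filter (fun i : Fin d => (i : ℕ) < k), ?_, rfl⟩, ?_⟩
  · rw [Fin.card_filter_val_lt, min_eq_right hk]
  · rintro x ⟨s, rfl, rfl⟩
    exact hv.sum_le_prefixSum s

lemma IsMajorizedBy.prefixSum_le {d k : ℕ} {x y : Fin d → ℝ} (hxy : IsMajorizedBy x y)
    (hx : Antitone x) (hy : Antitone y) (hk : k ≤ d) : prefixSum x k ≤ prefixSum y k := by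
  rcases Nat.eq_zero_or_pos k with rfl | hk0
  · simp [prefixSum]
  · have h := hxy.2 k hk0 (by simpa using hk)
    rwa [hx.sumKLargest_eq_prefixSum hk, hy.sumKLargest_eq_prefixSum hk] at h

lemma le_pow_sub_mul_of_ratio_le {d : ℕ} {g : ℝ} (hg : 0 ≤ g) {f : Fin d → ℝ}
    (hratio : ∀ i : Fin d, (i : ℕ) ≠ 0 →
      f i ≤ g * f ⟨(i : ℕ) - 1, Nat.lt_of_le_of_lt (Nat.sub_le _ _) i.isLt⟩)
    {i m : Fin d} (him : i ≤ m) : f m ≤ g ^ ((m : ℕ) - i) * f i := by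
  obtain ⟨n, hn⟩ := Nat.exists_eq_add_of_le (Fin.le_def.mp him)
  induction n generalizing m with
  | zero =>
    obtain rfl : m = i := Fin.ext hn
    simp
  | succ n ih =>
    set m' : Fin d := ⟨(m : ℕ) - 1, Nat.lt_of_le_of_lt (Nat.sub_le _ _) m.isLt⟩
    have hm' : (m' : ℕ) = i + n := by simp only [m']; omega
    calc f m ≤ g * f m' := hratio m (by omega)
      _ ≤ g * (g ^ ((m' : ℕ) - i) * f i) :=
        mul_le_mul_of_nonneg_left (ih (Fin.le_def.mpr (by omega)) hm') hg
      _ = g ^ ((m : ℕ) - i) * f i := by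
        rw [← mul_assoc, ← pow_succ', hm', hn]
        congr 2
        omega

lemma sum_mul_sum_le_sum_mul_sum_of_cross {ι : Type*} [Fintype ι] (s : Finset ι) {f w : ι → ℝ}
    (hcross : ∀ i ∈ s, ∀ m ∉ s, w i * f m ≤ w m * f i) :
    (∑ i ∈ s, w i) * ∑ i, f i ≤ (∑ i, w i) * ∑ i ∈ s, f i := by
  classical
  have hsplit : ∀ u : ι → ℝ, ∑ i, u i = ∑ i ∈ s, u i + ∑ i ∈ sᶜ, u i := fun u =>
    (sum_add_sum_compl s u).symm
  have hmixed : (∑ i ∈ s, w i) * ∑ m ∈ sᶜ, f m ≤ (∑ m ∈ sᶜ, w m) * ∑ i ∈ s, f i := by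
    rw [sum_mul_sum, sum_mul_sum, sum_comm (s := sᶜ)]
    exact sum_le_sum fun i hi => sum_le_sum fun m hm => hcross i hi m (mem_compl.mp hm)
  rw [hsplit f, hsplit w, mul_add, add_mul]
  linarith

lemma pstar_antitone {g : ℝ} (hg0 : 0 ≤ g) (hg1 : g ≤ 1) (d : ℕ) : Antitone (pstar g d) :=
  fun _ _ hij => div_le_div_of_nonneg_right (pow_le_pow_of_le_one hg0 hg1 hij)
    (sum_nonneg fun _ _ => pow_nonneg hg0 _)

lemma sum_pstar_pos {g : ℝ} (hg0 : 0 < g) {d : ℕ} (hd : 0 < d) : 0 < ∑ i, pstar g d i := by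
  have : Nonempty (Fin d) := ⟨⟨0, hd⟩⟩
  exact sum_pos (fun i _ => div_pos (pow_pos hg0 _) (sum_pos (fun j _ => pow_pos hg0 _)
    univ_nonempty)) univ_nonempty

lemma pstar_mul_le_of_ratio_le {d : ℕ} {g : ℝ} (hg : 0 ≤ g) {f : Fin d → ℝ}
    (hratio : ∀ i : Fin d, (i : ℕ) ≠ 0 →
      f i ≤ g * f ⟨(i : ℕ) - 1, Nat.lt_of_le_of_lt (Nat.sub_le _ _) i.isLt⟩)
    {i m : Fin d} (him : i ≤ m) : pstar g d i * f m ≤ pstar g d m * f i := by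
  have hG : 0 ≤ ∑ j : Fin d, g ^ (j : ℕ) := sum_nonneg fun _ _ => pow_nonneg hg _
  calc pstar g d i * f m ≤ pstar g d i * (g ^ ((m : ℕ) - i) * f i) :=
        mul_le_mul_of_nonneg_left (le_pow_sub_mul_of_ratio_le hg hratio him)
          (div_nonneg (pow_nonneg hg _) hG)
    _ = pstar g d m * f i := by
        simp only [pstar]
        rw [← pow_sub_mul_pow g (Fin.le_def.mp him)]
        ring

theorem ratio_and_majorized_implies_pstar_general {d : ℕ} (hd : 0 < d)
    (g : ℝ) (hg0 : 0 < g) (hg1 : g ≤ 1)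
    (f : Fin d → ℝ) (hdec : Antitone f)
    (hratio : ∀ i : Fin d, (i : ℕ) ≠ 0 →
      f i ≤ g * f ⟨(i : ℕ) - 1, Nat.lt_of_le_of_lt (Nat.sub_le _ _) i.isLt⟩)
    (hmaj : IsMajorizedBy f (pstar g d)) :
    f = pstar g d := by
  refine eq_of_prefixSum_eq fun k hk =>
    le_antisymm (hmaj.prefixSum_le hdec (pstar_antitone hg0.le hg1 d) hk) ?_
  have hcross := sum_mul_sum_le_sum_mul_sum_of_cross (univ.filter fun i : Fin d => (i : ℕ) < k)
    (f := f) (w := pstar g d) fun i hi m hm => by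
      simp only [mem_filter, mem_univ, true_and, not_lt] at hi hm
      exact pstar_mul_le_of_ratio_le hg0.le hratio (Fin.le_def.mpr (by omega))
  rw [hmaj.1, mul_comm] at hcross
  exact le_of_mul_le_mul_left hcross (sum_pstar_pos hg0 hd)

/-- If a decreasing probability vector `f` has successive ratios at most `g`
and is majorized by `p*(g,d)`, then `f = p*(g,d)`. -/
theorem ratio_and_majorized_implies_pstar {d : ℕ} (hd : 0 < d)
    (g : ℝ) (hg0 : 0 < g) (hg1 : g ≤ 1)
    (f : Fin d → ℝ) (hnn : ∀ i, 0 ≤ f i) (hsum : ∑ i, f i = 1) (hdec : Antitone f)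
    (hratio : ∀ i : Fin d, (i : ℕ) ≠ 0 →
      f i ≤ g * f ⟨(i : ℕ) - 1, Nat.lt_of_le_of_lt (Nat.sub_le _ _) i.isLt⟩)
    (hmaj : IsMajorizedBy f (pstar g d)) :
    f = pstar g d :=
  ratio_and_majorized_implies_pstar_general hd g hg0 hg1 f hdec hratio hmaj
end
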